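/- For n ≥ 1 let F_n ∈ ℂ[Z_1, …, Z_n] be the polynomials defined by exp(Σ_{n≥1} Z_n X^n) = 1 + Σ_{n≥1} F_n(Z_1,…,Z_n) X^n as formal power series in X. Let N ≥ 2 be an integer. Then there is a constant C_N depending only on N such that for every α = (α_1, …, α_{N−1}) ∈ ℂ^{N−1}, Σ_{n=1}^{N−1} |α_n| ≤ C_N · (1 + Σ_{n=1}^{N−1} |F_n(α_1,…,α_n)|)^{N−1}. -/

import Mathlib

noncomputable section

/-- The exponential of a formal power series (intended for series with zero constant term):
the coefficient of `X^n` in `exp F = ∑_k F^k / k!` (only `k ≤ n` contribute when the constant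
term of `F` vanishes). -/
def PowerSeries.expOf {K : Type*} [Field K] (F : PowerSeries K) : PowerSeries K :=
  PowerSeries.mk fun n =>
    ∑ k ∈ Finset.range (n + 1), (k.factorial : K)⁻¹ * PowerSeries.coeff n (F ^ k)


/-- `F_n(α_1, …, α_n)`: the coefficient of `X^n` in `exp (∑_{m ≥ 1} α_m X^m)`. -/
def Fval (n : ℕ) (α : ℕ → ℂ) : ℂ :=
  PowerSeries.coeff n (PowerSeries.expOf (PowerSeries.mk fun m => if m = 0 then 0 else α m))

/-!
Differentiating `exp A = 1 + ∑ F_n X^n`, where `A = ∑ α_m X^m`, gives `(exp A)' = exp A · A'`,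
i.e. the recurrence `n F_n = ∑_{m=1}^n m α_m F_{n-m}`. Solved for `α_n` (the term `m = n` is
`n α_n`, as `F_0 = 1`) it yields `|α_n| ≤ |F_n| + ∑_{0<m<n} |α_m| |F_{n-m}|`, and induction on `n`
gives `|α_n| ≤ (2^n - 1) S^n` with `S = 1 + ∑_{0<k<N} |F_k|`.
-/

namespace PowerSeries

open Finset
open scoped Nat

theorem coeff_pow_eq_zero_of_lt {R : Type*} [CommSemiring R] {F : R⟦X⟧}
    (hF : constantCoeff F = 0) {n k : ℕ} (h : n < k) : coeff n (F ^ k) = 0 :=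
  X_pow_dvd_iff.mp (pow_dvd_pow_of_dvd (X_dvd_iff.mpr hF) k) n h

variable {K : Type*} [Field K] {F : K⟦X⟧}

theorem coeff_expOf_eq_sum (hF : constantCoeff F = 0) {n M : ℕ} (h : n ≤ M) :
    coeff n (expOf F) = ∑ k ∈ range (M + 1), (k ! : K)⁻¹ * coeff n (F ^ k) := by
  rw [expOf, coeff_mk]
  refine sum_subset (range_subset_range.mpr (by omega)) fun k hkM hkn => ?_
  rw [coeff_pow_eq_zero_of_lt hF (by simp at hkM hkn; omega), mul_zero]

theorem coeff_expOf_mul (hF : constantCoeff F = 0) (G : K⟦X⟧) (n : ℕ) :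
    coeff n (expOf F * G) = ∑ k ∈ range (n + 1), (k ! : K)⁻¹ * coeff n (F ^ k * G) := by
  simp only [coeff_mul, mul_sum]
  rw [sum_comm]
  refine sum_congr rfl fun p hp => ?_
  rw [coeff_expOf_eq_sum hF (HasAntidiagonal.antidiagonal.fst_le hp), sum_mul]
  exact sum_congr rfl fun k _ => by ring

theorem derivative_expOf [CharZero K] (hF : constantCoeff F = 0) :
    d⁄dX K (expOf F) = expOf F * d⁄dX K F := by
  ext n
  have hpow (k : ℕ) : coeff n (d⁄dX K (F ^ k)) = k * coeff n (F ^ (k - 1) * d⁄dX K F) := by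
    rw [Derivation.leibniz_pow, map_nsmul, nsmul_eq_mul, smul_eq_mul]
  calc coeff n (d⁄dX K (expOf F))
      = ∑ k ∈ range (n + 2), (k ! : K)⁻¹ * coeff n (d⁄dX K (F ^ k)) := by
        simp only [coeff_derivative, coeff_expOf_eq_sum hF le_rfl, sum_mul, mul_assoc]
    _ = ∑ k ∈ range (n + 1), (k ! : K)⁻¹ * coeff n (F ^ k * d⁄dX K F) := by
        rw [sum_range_succ']
        simp only [hpow, Nat.cast_zero, zero_mul, mul_zero, add_zero, Nat.add_sub_cancel,
          Nat.factorial_succ, Nat.cast_mul, ← mul_assoc]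
        refine sum_congr rfl fun k _ => ?_
        rw [mul_inv, mul_right_comm _ _ ((k + 1 : ℕ) : K),
          inv_mul_cancel₀ (Nat.cast_ne_zero.mpr k.succ_ne_zero), one_mul]
    _ = coeff n (expOf F * d⁄dX K F) := (coeff_expOf_mul hF _ n).symm

end PowerSeries

open PowerSeries Finset

theorem le_two_pow_sub_one_mul_pow {a f : ℕ → ℝ} {S : ℝ} {N : ℕ} (hS : 1 ≤ S)
    (hf₀ : ∀ k, 0 ≤ f k) (hfS : ∀ k ∈ Icc 1 N, f k ≤ S)
    (ha : ∀ k ∈ Icc 1 N, a k ≤ f k + ∑ m ∈ Ico 1 k, a m * f (k - m)) :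
    ∀ k ∈ Icc 1 N, a k ≤ (2 ^ k - 1) * S ^ k := by
  intro k
  induction k using Nat.strong_induction_on with
  | _ k ih =>
    intro hk
    have hk₁ : 1 ≤ k := (mem_Icc.mp hk).1
    have hterm : ∀ m ∈ Ico 1 k, a m * f (k - m) ≤ 2 ^ m * S ^ k := by
      intro m hm
      obtain ⟨hm₁, hmk⟩ := mem_Ico.mp hm
      have hmN : m ∈ Icc 1 N := mem_Icc.mpr ⟨hm₁, by grind⟩
      calc a m * f (k - m) ≤ ((2 ^ m - 1) * S ^ m) * S :=
            mul_le_mul (ih m hmk hmN) (hfS _ (mem_Icc.mpr (by grind))) (hf₀ _)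
              (mul_nonneg (sub_nonneg.mpr (one_le_pow₀ one_le_two)) (by positivity))
        _ ≤ 2 ^ m * S ^ (m + 1) := by
            rw [pow_succ, ← mul_assoc]
            gcongr
            linarith
        _ ≤ 2 ^ m * S ^ k := by gcongr; exact hmk
    calc a k ≤ f k + ∑ m ∈ Ico 1 k, a m * f (k - m) := ha k hk
      _ ≤ S ^ k + ∑ m ∈ Ico 1 k, 2 ^ m * S ^ k :=
          add_le_add ((hfS k hk).trans (le_self_pow₀ hS (by omega))) (sum_le_sum hterm)
      _ = (2 ^ k - 1) * S ^ k := by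
          rw [← sum_mul, geom_sum_Ico (by norm_num) hk₁]; ring

def alphaSeries (α : ℕ → ℂ) : ℂ⟦X⟧ := PowerSeries.mk fun m => if m = 0 then 0 else α m

section

variable (α : ℕ → ℂ)

theorem constantCoeff_alphaSeries : constantCoeff (alphaSeries α) = 0 := by
  simp [alphaSeries, ← coeff_zero_eq_constantCoeff_apply]

theorem Fval_eq_coeff_expOf (n : ℕ) : Fval n α = coeff n (expOf (alphaSeries α)) := rfl

theorem Fval_zero : Fval 0 α = 1 := by
  simp [Fval_eq_coeff_expOf, coeff_expOf_eq_sum (constantCoeff_alphaSeries α) le_rfl]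

theorem succ_mul_Fval_succ (n : ℕ) :
    (n + 1 : ℂ) * Fval (n + 1) α =
      ∑ m ∈ range (n + 1), (m + 1 : ℂ) * α (m + 1) * Fval (n - m) α := by
  have h := congrArg (coeff n) (derivative_expOf (constantCoeff_alphaSeries α))
  rw [mul_comm, coeff_mul, Nat.sum_antidiagonal_eq_sum_range_succ_mk, coeff_derivative] at h
  simpa [Fval_eq_coeff_expOf, coeff_derivative, alphaSeries, mul_comm] using h

theorem norm_le_norm_Fval_add_sum {n : ℕ} (hn : 1 ≤ n) :
    ‖α n‖ ≤ ‖Fval n α‖ + ∑ m ∈ Ico 1 n, ‖α m‖ * ‖Fval (n - m) α‖ := by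
  obtain ⟨j, rfl⟩ : ∃ j, n = j + 1 := ⟨n - 1, by omega⟩
  have hrec := succ_mul_Fval_succ α j
  rw [sum_range_succ, Nat.sub_self, Fval_zero, mul_one] at hrec
  have hα : (j + 1 : ℂ) * α (j + 1) =
      (j + 1 : ℂ) * Fval (j + 1) α - ∑ m ∈ range j, (m + 1 : ℂ) * α (m + 1) * Fval (j - m) α := by
    rw [hrec]; ring
  have hsum : ∑ m ∈ Ico 1 (j + 1), ‖α m‖ * ‖Fval (j + 1 - m) α‖ =
      ∑ m ∈ range j, ‖α (m + 1)‖ * ‖Fval (j - m) α‖ := by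
    rw [range_eq_Ico, ← sum_Ico_add' _ 0 j 1]
    simp only [Nat.add_sub_add_right]
  rw [hsum]
  refine le_of_mul_le_mul_left ?_ (by positivity : (0 : ℝ) < j + 1)
  calc (j + 1 : ℝ) * ‖α (j + 1)‖ = ‖(j + 1 : ℂ) * α (j + 1)‖ := by
        rw [norm_mul]; norm_cast
    _ ≤ (j + 1 : ℝ) * ‖Fval (j + 1) α‖ +
          ∑ m ∈ range j, (m + 1 : ℝ) * (‖α (m + 1)‖ * ‖Fval (j - m) α‖) := by
        rw [hα]
        refine (norm_sub_le _ _).trans (add_le_add (by rw [norm_mul]; norm_cast) ?_)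
        refine (norm_sum_le _ _).trans (sum_le_sum fun m _ => ?_)
        rw [norm_mul, norm_mul, mul_assoc]; norm_cast
    _ ≤ (j + 1 : ℝ) * ‖Fval (j + 1) α‖ +
          ∑ m ∈ range j, (j + 1 : ℝ) * (‖α (m + 1)‖ * ‖Fval (j - m) α‖) := by
        gcongr with m hm
        exact_mod_cast (mem_range.mp hm).le
    _ = (j + 1 : ℝ) * (‖Fval (j + 1) α‖ + ∑ m ∈ range j, ‖α (m + 1)‖ * ‖Fval (j - m) α‖) := by
        rw [mul_add, mul_sum]

end

theorem norm_le_of_exp_coeff_general (N : ℕ) :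
    ∃ C : ℝ, 0 < C ∧ ∀ α : ℕ → ℂ,
      (∑ n ∈ Finset.Icc 1 (N - 1), ‖α n‖) ≤
        C * (1 + ∑ n ∈ Finset.Icc 1 (N - 1), ‖Fval n α‖) ^ (N - 1) := by
  refine ⟨2 ^ N, by positivity, fun α => ?_⟩
  set S := 1 + ∑ n ∈ Icc 1 (N - 1), ‖Fval n α‖
  have hS : 1 ≤ S := le_add_of_nonneg_right (sum_nonneg fun _ _ => norm_nonneg _)
  have hFS (k : ℕ) (hk : k ∈ Icc 1 (N - 1)) : ‖Fval k α‖ ≤ S :=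
    (single_le_sum (f := fun n => ‖Fval n α‖) (fun _ _ => norm_nonneg _) hk).trans
      (le_add_of_nonneg_left zero_le_one)
  have hα := le_two_pow_sub_one_mul_pow hS (fun k => norm_nonneg (Fval k α)) hFS
    fun k hk => norm_le_norm_Fval_add_sum α (mem_Icc.mp hk).1
  calc ∑ n ∈ Icc 1 (N - 1), ‖α n‖ ≤ ∑ n ∈ Icc 1 (N - 1), (2 : ℝ) ^ n * S ^ (N - 1) :=
        sum_le_sum fun n hn => (hα n hn).trans <|
          mul_le_mul (by linarith) (pow_le_pow_right₀ hS (mem_Icc.mp hn).2) (by positivity)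
            (by positivity)
    _ ≤ ∑ n ∈ range N, (2 : ℝ) ^ n * S ^ (N - 1) :=
        sum_le_sum_of_subset_of_nonneg (fun n hn => by simp at hn ⊢; omega)
          fun _ _ _ => by positivity
    _ ≤ 2 ^ N * S ^ (N - 1) := by
        rw [← sum_mul, geom_sum_eq (by norm_num) N]
        gcongr
        linarith

/-- **Lemma 3.7 (i).**  `∑_{n=1}^{N-1} |α_n| ≤ C_N (1 + ∑_{n=1}^{N-1} |F_n(α_1,…,α_n)|)^{N-1}`. -/
theorem norm_le_of_exp_coeff (N : ℕ) (hN : 2 ≤ N) :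
    ∃ C : ℝ, 0 < C ∧ ∀ α : ℕ → ℂ,
      (∑ n ∈ Finset.Icc 1 (N - 1), ‖α n‖) ≤
        C * (1 + ∑ n ∈ Finset.Icc 1 (N - 1), ‖Fval n α‖) ^ (N - 1) :=
  norm_le_of_exp_coeff_general N

end
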